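/- arXiv:2112.04797 — 7 statements merged into one kernel-verified Lean document; each statement's English description precedes it below -/
import Mathlib

section
/- Let V be a finite type of variables with n = card V, and let Ψ be a BST⁺ formula over V. If Ψ has a model, then for every natural number b ≥ n + 1, Ψ has a b-flat model. -/
/-- BST⁺ formulae over a variable type `V`: atoms `x = y \ z` combined with
conjunction, disjunction and negation. -/
inductive BSTFormula (V : Type*) : Type _
  | atom : V → V → V → BSTFormula V
  | and  : BSTFormula V → BSTFormula V → BSTFormula V
  | or   : BSTFormula V → BSTFormula V → BSTFormula V
  | not  : BSTFormula V → BSTFormula V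

/-- Satisfaction of a BST⁺ formula by a set assignment. -/
def BSTFormula.Satisfies {V : Type*} (M : V → ZFSet) : BSTFormula V → Prop
  | .atom x y z => M x = M y \ M z
  | .and f g    => f.Satisfies M ∧ g.Satisfies M
  | .or f g     => f.Satisfies M ∨ g.Satisfies M
  | .not f      => ¬ f.Satisfies M

/-- An assignment `M : V → ZFSet` is `b`-flat if every member of every value of `M`
has rank exactly `b`. -/
def IsFlat {V : Type*} (b : Ordinal) (M : V → ZFSet) : Prop :=
  ∀ v : V, ∀ u : ZFSet, u ∈ M v → u.rank = b

/-!
Whether an assignment `M` satisfies a BST⁺ formula depends only on which nonempty Venn regions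
of `M` are inhabited, i.e. on the sets `{v | u ∈ M v}` for `u` ranging over all sets. Since `V`
is finite there are finitely many such patterns, and each one can be coded by a distinct set of
rank `b` as soon as `b > card V`: add the ordinal `b - 1` to a subset of `b - 1` chosen injectively.
Replacing every inhabited region by its code yields a `b`-flat model with the same patterns.
-/

open Set Function

universe u w

namespace ZFSet

theorem rank_insert_toZFSet_of_subset {o : Ordinal.{u}} {x : ZFSet.{u}} (hx : x ⊆ o.toZFSet) :
    (insert o.toZFSet x).rank = o + 1 := by
  rw [rank_insert, Ordinal.rank_toZFSet, Order.succ_eq_add_one]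
  refine max_eq_left ((rank_mono hx).trans ?_)
  rw [Ordinal.rank_toZFSet]
  exact le_self_add

theorem injOn_insert_toZFSet (o : Ordinal.{u}) :
    InjOn (insert o.toZFSet) {x : ZFSet.{u} | x ⊆ o.toZFSet} := by
  have mem_iff {x z} (hx : x ⊆ o.toZFSet) :
      z ∈ x ↔ z ∈ insert o.toZFSet x ∧ z ≠ o.toZFSet := by
    rw [mem_insert_iff]
    refine ⟨fun hz => ⟨Or.inr hz, ?_⟩, fun ⟨hz, hne⟩ => hz.resolve_left hne⟩
    rintro rfl
    exact mem_irrefl _ (hx hz)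
  intro x hx y hy hxy
  ext z
  rw [mem_iff hx, mem_iff hy, hxy]

theorem range_subtype_injective {α : Type*} [Small.{u} α] {f : α → ZFSet.{u}}
    (hf : Injective f) : Injective fun s : Set α => range fun a : s => f a := by
  have mem_iff (s : Set α) (a : α) : f a ∈ range (fun a : s => f a) ↔ a ∈ s := by
    simp [hf.eq_iff]
  intro s t hst
  ext a
  rw [← mem_iff s, ← mem_iff t, show (range fun a : s => f a) = range fun a : t => f a from hst]

end ZFSet

theorem exists_injective_rank_eq (V : Type*) [Finite V] {b : ℕ} (hb : Nat.card V < b) :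
    ∃ X : Set V → ZFSet.{u}, Injective X ∧ ∀ σ, (X σ).rank = b := by
  obtain ⟨k, rfl⟩ : ∃ k, b = k + 1 := ⟨b - 1, by omega⟩
  let code (v : V) : ZFSet.{u} := ((Finite.equivFin V v : ℕ) : Ordinal).toZFSet
  have code_mem (v : V) : code v ∈ (k : Ordinal).toZFSet := by
    simp only [code, Ordinal.toZFSet_mem_toZFSet_iff, Nat.cast_lt]
    omega
  have code_injective : Injective code := fun v w h =>
    (Finite.equivFin V).injective (Fin.ext (by simpa [code] using Ordinal.toZFSet_injective h))
  let Y (σ : Set V) : ZFSet.{u} := ZFSet.range fun v : σ => code v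
  have Y_subset (σ : Set V) : Y σ ⊆ (k : Ordinal).toZFSet := by
    intro z hz
    obtain ⟨v, rfl⟩ := ZFSet.mem_range.1 hz
    exact code_mem v
  refine ⟨fun σ => insert (k : Ordinal).toZFSet (Y σ), fun σ τ h => ?_, fun σ => ?_⟩
  · exact ZFSet.range_subtype_injective code_injective
      (ZFSet.injOn_insert_toZFSet _ (Y_subset σ) (Y_subset τ) h)
  · rw [ZFSet.rank_insert_toZFSet_of_subset (Y_subset σ), Nat.cast_succ]

namespace BSTFormula

variable {V : Type*}

def pattern (M : V → ZFSet.{u}) (u : ZFSet.{u}) : Set V := {v | u ∈ M v}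

theorem satisfies_atom_iff {M : V → ZFSet.{u}} {x y z : V} :
    (atom x y z).Satisfies M ↔ ∀ σ ∈ range (pattern M) \ {∅}, (x ∈ σ ↔ y ∈ σ ∧ z ∉ σ) := by
  simp only [Satisfies, ZFSet.ext_iff, ZFSet.mem_sdiff]
  refine ⟨fun h σ ⟨⟨u, hu⟩, _⟩ => hu ▸ h u, fun h u => ?_⟩
  by_cases hu : pattern M u = ∅
  · have hv (v : V) : u ∉ M v := eq_empty_iff_forall_notMem.1 hu v
    simp [hv]
  · exact h _ ⟨⟨u, rfl⟩, hu⟩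

theorem satisfies_congr_of_patterns {M : V → ZFSet.{u}} {N : V → ZFSet.{w}}
    (h : range (pattern M) \ {∅} = range (pattern N) \ {∅}) (Φ : BSTFormula V) :
    Φ.Satisfies M ↔ Φ.Satisfies N := by
  induction Φ with
  | atom x y z => rw [satisfies_atom_iff, satisfies_atom_iff, h]
  | and f g ihf ihg => simp only [Satisfies, ihf, ihg]
  | or f g ihf ihg => simp only [Satisfies, ihf, ihg]
  | not f ihf => simp only [Satisfies, ihf]

section Realize

variable [Small.{u} (Set V)] (R : Set (Set V)) (X : Set V → ZFSet.{u})

noncomputable def realize (v : V) : ZFSet.{u} :=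
  ZFSet.range fun σ : {σ // σ ∈ R ∧ v ∈ σ} => X σ

variable {R X}

theorem mem_realize {v : V} {u : ZFSet.{u}} : u ∈ realize R X v ↔ ∃ σ ∈ R, v ∈ σ ∧ X σ = u := by
  simp [realize, and_assoc]

theorem pattern_realize_of_mem (hX : Injective X) {σ : Set V} (hσ : σ ∈ R) :
    pattern (realize R X) (X σ) = σ := by
  ext v
  simp only [pattern, mem_ofPred_eq, mem_realize, hX.eq_iff]
  exact ⟨fun ⟨τ, _, hv, hτσ⟩ => hτσ ▸ hv, fun hv => ⟨σ, hσ, hv, rfl⟩⟩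

theorem range_pattern_realize (hX : Injective X) :
    range (pattern (realize R X)) \ {∅} = R \ {∅} := by
  ext σ
  simp only [mem_sdiff, mem_range, mem_singleton_iff, ← ne_eq, ← nonempty_iff_ne_empty]
  constructor
  · rintro ⟨⟨u, rfl⟩, v, hv⟩
    obtain ⟨τ, hτ, -, rfl⟩ := mem_realize.1 hv
    rw [pattern_realize_of_mem hX hτ] at hv ⊢
    exact ⟨hτ, v, hv⟩
  · rintro ⟨hσ, hne⟩
    exact ⟨⟨X σ, pattern_realize_of_mem hX hσ⟩, hne⟩

theorem isFlat_realize {b : Ordinal.{u}} (hX : ∀ σ, (X σ).rank = b) : IsFlat b (realize R X) := by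
  intro v u hu
  obtain ⟨σ, -, -, rfl⟩ := mem_realize.1 hu
  exact hX σ

end Realize

end BSTFormula

theorem exists_flat_model {V : Type*} [Fintype V] (n : ℕ) (hn : n = Fintype.card V)
    (Ψ : BSTFormula V) (hsat : ∃ M : V → ZFSet, Ψ.Satisfies M) :
    ∀ b : ℕ, n + 1 ≤ b → ∃ M : V → ZFSet, IsFlat (b : Ordinal) M ∧ Ψ.Satisfies M := by
  obtain ⟨M₀, hM₀⟩ := hsat
  intro b hb
  obtain ⟨X, hX, hrank⟩ := exists_injective_rank_eq V (b := b) (by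
    rw [Nat.card_eq_fintype_card]
    omega)
  refine ⟨BSTFormula.realize (range (BSTFormula.pattern M₀)) X,
    BSTFormula.isFlat_realize hrank, ?_⟩
  exact (BSTFormula.satisfies_congr_of_patterns (BSTFormula.range_pattern_realize hX) Ψ).2 hM₀
end

section
/- Let V be a finite type of variables and let M, M' : V → ZFSet be assignments such that, for every nonempty subset W of V, the region R_W(M) is nonempty if and only if the region R_W(M') is nonempty. Then for all x, y, z : V, M x = M y \ M z holds if and only if M' x = M' y \ M' z holds. -/
/-- The region `R_W(M)`: the collection of sets belonging to `M x` for every `x ∈ W`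
and to no `M y` with `y ∉ W`. -/
def Region {V : Type*} (M : V → ZFSet) (W : Set V) : Set ZFSet :=
  {s | (∀ x ∈ W, s ∈ M x) ∧ ∀ y ∉ W, s ∉ M y}

/-! Every set `s` lies in exactly one region, namely that of `W = {v | s ∈ M v}`; so a membership
identity such as `M x = M y \ M z` holds iff it holds "pointwise" on the index set `W` of every
nonempty region. This condition only sees which regions are nonempty. -/

section Region

variable {V : Type*} {M : V → ZFSet}

lemma mem_iff_of_mem_region {W : Set V} {s : ZFSet} (hs : s ∈ Region M W) (v : V) :
    s ∈ M v ↔ v ∈ W :=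
  ⟨fun hv => by_contra fun hvW => hs.2 v hvW hv, hs.1 v⟩

lemma mem_region_setOf_mem (M : V → ZFSet) (s : ZFSet) : s ∈ Region M {v | s ∈ M v} :=
  ⟨fun _ hv => hv, fun _ hv => hv⟩

-- The empty `W` is excluded because `R_∅(M)` contains every set outside all `M v`.
lemma eq_sdiff_iff_forall_region_nonempty (M : V → ZFSet) (x y z : V) :
    M x = M y \ M z ↔
      ∀ W : Set V, W.Nonempty → (Region M W).Nonempty → (x ∈ W ↔ y ∈ W ∧ z ∉ W) := by
  constructor
  · rintro heq W - ⟨s, hs⟩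
    simpa only [ZFSet.mem_sdiff, mem_iff_of_mem_region hs] using ZFSet.ext_iff.mp heq s
  · intro hW
    ext s
    rw [ZFSet.mem_sdiff]
    rcases ({v | s ∈ M v} : Set V).eq_empty_or_nonempty with hempty | hne
    · have hout : ∀ v, s ∉ M v := fun v hv => hempty.subset hv
      simp only [hout, false_and]
    · exact hW _ hne ⟨s, mem_region_setOf_mem M s⟩

end Region

theorem regions_determine_atoms_general {V : Type*} (M M' : V → ZFSet)
    (h : ∀ W : Set V, W.Nonempty → ((Region M W).Nonempty ↔ (Region M' W).Nonempty)) :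
    ∀ x y z : V, M x = M y \ M z ↔ M' x = M' y \ M' z := by
  intro x y z
  rw [eq_sdiff_iff_forall_region_nonempty M, eq_sdiff_iff_forall_region_nonempty M']
  exact forall_congr' fun W => forall_congr' fun hW => imp_congr_left (h W hW)

theorem regions_determine_atoms {V : Type*} [Fintype V] (M M' : V → ZFSet)
    (h : ∀ W : Set V, W.Nonempty → ((Region M W).Nonempty ↔ (Region M' W).Nonempty)) :
    ∀ x y z : V, M x = M y \ M z ↔ M' x = M' y \ M' z :=
  regions_determine_atoms_general M M' h
end

section
/- Let V be a type of variables, S a finite set of pairs of variables (singleton atoms), and M, T : V → ZFSet assignments such that for every (a, b) ∈ S and every v : V, if M a ∩ M v ≠ ∅ then T b ⊊ T v. Define the relation ≺̇ on S by: (a, b) ≺̇ (a', b') iff M a ∩ M b' ≠ ∅, and let ≺ be the transitive closure of ≺̇. Then ≺ is a strict partial order on S, i.e. it is transitive and irreflexive (equivalently, ≺̇ admits no cycles). -/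
/-- `M` models the positive literals `a = b \ c` in `P` and the negative literals
`a ≠ b \ c` in `N`. -/
def ModelsLits {V : Type*} (P N : Finset (V × V × V)) (M : V → ZFSet) : Prop :=
  (∀ t ∈ P, M t.1 = M t.2.1 \ M t.2.2) ∧ (∀ t ∈ N, M t.1 ≠ M t.2.1 \ M t.2.2)

/-- `M` models the whole constraint system `(P, N, S)`. -/
def ModelsSystem {V : Type*} (P N : Finset (V × V × V)) (S : Finset (V × V))
    (M : V → ZFSet) : Prop :=
  ModelsLits P N M ∧ ∀ p ∈ S, M p.1 = {M p.2}

/-- The pair of assignments `(M, T)` satisfies the Ξ-conditions for the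
constraint system `(P, N, S)`. -/
def XiConditions {V : Type*} (S : Finset (V × V)) (M T : V → ZFSet) : Prop :=
  (∀ p ∈ S, ¬ M p.1 ⊆ M p.2) ∧
  (∀ p ∈ S, ∀ q ∈ S, (M p.2 = M q.2 ↔ M p.1 = M q.1)) ∧
  (∀ p ∈ S, ∀ v : V, M p.1 ∩ M v ≠ ∅ → M p.1 ⊆ M v) ∧
  (∀ p ∈ S, ∀ v : V, M p.1 ∩ M v ≠ ∅ → T p.2 ⊆ T v ∧ T p.2 ≠ T v) ∧
  (∀ u v : V, M u = M v → T u = T v)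

open Classical in
/-- The modified assignment `M_{x,y}`. -/
noncomputable def modifyAssign {V : Type*} (M : V → ZFSet) (x y : V) : V → ZFSet :=
  fun v => if M x ∩ M v = ∅ then M v else (M v \ M x) ∪ {M y}

theorem prec_strict_partial_order {V : Type*} (S : Finset (V × V)) (M T : V → ZFSet)
    (h : ∀ p ∈ S, ∀ v : V, M p.1 ∩ M v ≠ ∅ → T p.2 ⊆ T v ∧ T p.2 ≠ T v) :
    Transitive (Relation.TransGen
        (fun p q : V × V => p ∈ S ∧ q ∈ S ∧ M p.1 ∩ M q.2 ≠ ∅)) ∧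
    Irreflexive (Relation.TransGen
        (fun p q : V × V => p ∈ S ∧ q ∈ S ∧ M p.1 ∩ M q.2 ≠ ∅)) := by
  set r := fun p q : V × V => p ∈ S ∧ q ∈ S ∧ M p.1 ∩ M q.2 ≠ ∅ with hr
  have key : ∀ p q : V × V, r p q → T p.2 ⊆ T q.2 ∧ T p.2 ≠ T q.2 := by
    rintro p q ⟨hp, _, hne⟩
    exact h p hp q.2 hne
  refine ⟨fun a b c hab hbc => hab.trans hbc, ?_⟩
  intro p hp
  have main : ∀ q : V × V, Relation.TransGen r p q → T p.2 ⊆ T q.2 ∧ T p.2 ≠ T q.2 := by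
    intro q hq
    induction hq with
    | single hpq => exact key _ _ hpq
    | tail _ hbc ih =>
      obtain ⟨h1, h2⟩ := ih
      obtain ⟨h3, h4⟩ := key _ _ hbc
      refine ⟨h1.trans h3, fun heq => ?_⟩
      have hcb : T _ ⊆ T _ := heq ▸ h1
      exact h4 (ZFSet.ext fun z => ⟨fun hz => h3 hz, fun hz => hcb hz⟩)
  exact (main p hp).2 rfl
end

section
/- Let V be a type of variables with a constraint system (P, N, S), let (x, y) ∈ S, and let M, T : V → ZFSet be such that M models the literals P and N, the pair (M, T) satisfies the Ξ-conditions for (P, N, S), and M y ∉ M v for every v : V. Then for all u, v : V, M u ⊆ M v holds if and only if M_{x,y} u ⊆ M_{x,y} v holds. -/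
namespace ZFSet

open Classical in
noncomputable def collapse (A b X : ZFSet) : ZFSet :=
  if A ∩ X = ∅ then X else X \ A ∪ {b}

open Classical in
noncomputable def expand (A b W : ZFSet) : ZFSet :=
  if b ∈ W then W \ {b} ∪ A else W

variable {A b : ZFSet}

theorem inter_eq_empty_iff {X Y : ZFSet} : X ∩ Y = ∅ ↔ ∀ z ∈ X, z ∉ Y := by
  simp [eq_empty]

theorem collapse_mono : Monotone (collapse A b) := by
  intro X Y hXY z
  simp only [collapse]
  rw [inter_eq_empty_iff, inter_eq_empty_iff]
  split_ifs with hX hY hY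
  · exact fun hz => hXY hz
  · simp only [mem_union, mem_sdiff, mem_singleton]
    exact fun hz => Or.inl ⟨hXY hz, fun hA => hX z hA hz⟩
  · exact (hX fun w hw hwX => hY w hw (hXY hwX)).elim
  · simp only [mem_union, mem_sdiff, mem_singleton]
    exact fun hz => hz.imp_left fun h => ⟨hXY h.1, h.2⟩

theorem expand_mono : Monotone (expand A b) := by
  intro W W' hW z
  simp only [expand]
  split_ifs with h h' h'
  · simp only [mem_union, mem_sdiff, mem_singleton]
    exact fun hz => hz.imp_left fun h => ⟨hW h.1, h.2⟩
  · exact (h' (hW h)).elim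
  · simp only [mem_union, mem_sdiff, mem_singleton]
    exact fun hz => Or.inl ⟨hW hz, fun hzb => h (hzb ▸ hz)⟩
  · exact fun hz => hW hz

theorem expand_collapse {X : ZFSet} (hbX : b ∉ X) (hAX : A ∩ X ≠ ∅ → A ⊆ X) :
    expand A b (collapse A b X) = X := by
  by_cases hX : A ∩ X = ∅
  · simp [collapse, expand, hX, hbX]
  · ext z
    have hAsub := hAX hX
    simp only [collapse, expand, hX, if_false, mem_union, mem_singleton, or_true, if_true, mem_sdiff]
    constructor
    · rintro (⟨⟨h, -⟩ | rfl, hzb⟩ | h)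
      exacts [h, absurd rfl hzb, hAsub h]
    · intro hz
      by_cases hzA : z ∈ A
      · exact Or.inr hzA
      · exact Or.inl ⟨Or.inl ⟨hz, hzA⟩, fun h => hbX (h ▸ hz)⟩

theorem collapse_subset_collapse_iff {X Y : ZFSet} (hbX : b ∉ X) (hbY : b ∉ Y)
    (hAX : A ∩ X ≠ ∅ → A ⊆ X) (hAY : A ∩ Y ≠ ∅ → A ⊆ Y) :
    collapse A b X ⊆ collapse A b Y ↔ X ⊆ Y := by
  refine ⟨fun h => ?_, fun h => collapse_mono h⟩
  rw [← expand_collapse hbX hAX, ← expand_collapse hbY hAY]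
  exact expand_mono h

end ZFSet

theorem modify_subset_iff_general {V : Type*} (S : Finset (V × V))
    (x y : V) (hxy : (x, y) ∈ S) (M T : V → ZFSet)
    (hXi : XiConditions S M T)
    (hy : ∀ v : V, M y ∉ M v) :
    ∀ u v : V, M u ⊆ M v ↔ modifyAssign M x y u ⊆ modifyAssign M x y v := by
  have hblock : ∀ v, M x ∩ M v ≠ ∅ → M x ⊆ M v := hXi.2.2.1 (x, y) hxy
  intro u v
  exact (ZFSet.collapse_subset_collapse_iff (hy u) (hy v) (hblock u) (hblock v)).symm

theorem modify_subset_iff {V : Type*} (P N : Finset (V × V × V)) (S : Finset (V × V))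
    (x y : V) (hxy : (x, y) ∈ S) (M T : V → ZFSet)
    (hM : ModelsLits P N M) (hXi : XiConditions S M T)
    (hy : ∀ v : V, M y ∉ M v) :
    ∀ u v : V, M u ⊆ M v ↔ modifyAssign M x y u ⊆ modifyAssign M x y v :=
  modify_subset_iff_general S x y hxy M T hXi hy
end

section
/- Let V be a type of variables with a constraint system (P, N, S), let (x, y) ∈ S, and let M, T : V → ZFSet be such that M models the literals P and N, the pair (M, T) satisfies the Ξ-conditions for (P, N, S), and M y ∉ M v for every v : V. Then for all u, v : V, M u ∩ M v = ∅ holds if and only if M_{x,y} u ∩ M_{x,y} v = ∅ holds. -/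
/-! A set `M u` disjoint from `M x` is left unchanged, and it meets `(M v \ M x) ∪ {M y}` exactly
where it meets `M v`, because `M y ∉ M u`. Two sets that both meet `M x` contain all of `M x`
(Ξ-condition (iii)), so they intersect, and after modification they share `M y`, so both sides of
the equivalence fail. -/

namespace ZFSet

theorem inter_comm (a b : ZFSet) : a ∩ b = b ∩ a := by
  ext; simp only [mem_inter, and_comm]

theorem inter_ne_empty_of_mem {a b z : ZFSet} (ha : z ∈ a) (hb : z ∈ b) : a ∩ b ≠ ∅ :=
  fun h => (eq_empty _).1 h z (mem_inter.2 ⟨ha, hb⟩)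

theorem inter_sdiff_union_singleton_of_disjoint {a b c e : ZFSet} (hab : a ∩ b = ∅)
    (he : e ∉ b) : b ∩ (c \ a ∪ {e}) = b ∩ c := by
  ext z
  simp only [mem_inter, mem_union, mem_sdiff, mem_singleton]
  constructor
  · rintro ⟨hzb, ⟨hzc, -⟩ | rfl⟩
    exacts [⟨hzb, hzc⟩, absurd hzb he]
  · rintro ⟨hzb, hzc⟩
    exact ⟨hzb, Or.inl ⟨hzc, fun hza => (eq_empty _).1 hab z (mem_inter.2 ⟨hza, hzb⟩)⟩⟩

end ZFSet

section modifyAssign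

variable {V : Type*} (M : V → ZFSet) (x y : V) {u v : V}

theorem modifyAssign_of_disjoint (h : M x ∩ M v = ∅) : modifyAssign M x y v = M v :=
  if_pos h

theorem modifyAssign_of_not_disjoint (h : M x ∩ M v ≠ ∅) :
    modifyAssign M x y v = M v \ M x ∪ {M y} :=
  if_neg h

theorem mem_modifyAssign_of_not_disjoint (h : M x ∩ M v ≠ ∅) : M y ∈ modifyAssign M x y v := by
  rw [modifyAssign_of_not_disjoint M x y h, ZFSet.mem_union, ZFSet.mem_singleton]
  exact Or.inr rfl

theorem modifyAssign_inter_of_disjoint (hu : M x ∩ M u = ∅) (hy : M y ∉ M u) :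
    modifyAssign M x y u ∩ modifyAssign M x y v = M u ∩ M v := by
  rw [modifyAssign_of_disjoint M x y hu]
  by_cases hv : M x ∩ M v = ∅
  · rw [modifyAssign_of_disjoint M x y hv]
  · rw [modifyAssign_of_not_disjoint M x y hv,
      ZFSet.inter_sdiff_union_singleton_of_disjoint hu hy]

end modifyAssign

theorem modify_disjoint_iff_general {V : Type*} (S : Finset (V × V))
    (x y : V) (hxy : (x, y) ∈ S) (M T : V → ZFSet)
    (hXi : XiConditions S M T)
    (hy : ∀ v : V, M y ∉ M v) :
    ∀ u v : V, M u ∩ M v = ∅ ↔ modifyAssign M x y u ∩ modifyAssign M x y v = ∅ := by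
  intro u v
  by_cases hu : M x ∩ M u = ∅
  · rw [modifyAssign_inter_of_disjoint M x y hu (hy u)]
  by_cases hv : M x ∩ M v = ∅
  · rw [ZFSet.inter_comm (M u), ZFSet.inter_comm (modifyAssign M x y u),
      modifyAssign_inter_of_disjoint M x y hv (hy v)]
  obtain ⟨z, hz⟩ := (ZFSet.eq_empty_or_nonempty _).resolve_left hu
  rw [SetLike.mem_coe, ZFSet.mem_inter] at hz
  have hxv : M x ⊆ M v := hXi.2.2.1 (x, y) hxy v hv
  exact iff_of_false (ZFSet.inter_ne_empty_of_mem hz.2 (hxv hz.1))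
    (ZFSet.inter_ne_empty_of_mem (mem_modifyAssign_of_not_disjoint M x y hu)
      (mem_modifyAssign_of_not_disjoint M x y hv))

theorem modify_disjoint_iff {V : Type*} (P N : Finset (V × V × V)) (S : Finset (V × V))
    (x y : V) (hxy : (x, y) ∈ S) (M T : V → ZFSet)
    (hM : ModelsLits P N M) (hXi : XiConditions S M T)
    (hy : ∀ v : V, M y ∉ M v) :
    ∀ u v : V, M u ∩ M v = ∅ ↔ modifyAssign M x y u ∩ modifyAssign M x y v = ∅ :=
  modify_disjoint_iff_general S x y hxy M T hXi hy
end

section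
/- Let V be a type of variables with a constraint system (P, N, S), and let M : V → ZFSet be an assignment that models the whole system (P, N, S). Then there exists an assignment T : V → ZFSet such that the pair (M, T) satisfies all the Ξ-conditions (i)–(v) for (P, N, S). (In particular, T can be taken as T v = {M x | x : V, M x ∈⁺ M v}, where ∈⁺ is the transitive closure of membership on the values of M.) -/
/-!
Each singleton atom forces `M a = {M b}` with `M b ∉ M b`, which gives (i)–(iii) for any `T`.
For (iv) and (v) it suffices to send `v` to a von Neumann level `V_ n` indexed by a natural
number `n` that depends only on `M v` and strictly increases from `M b` to any set containing it.
Counting the atoms `(a, b) ∈ S` whose `M b` has rank below that of `M v` is such an index: the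
atom `(a, b)` itself is counted for `M v ∋ M b` but not for `M b`. Indexing by a natural number
rather than by the rank itself lets `T` take values in any universe.
-/

open ZFSet
open scoped Finset

theorem Finset.card_filter_lt_lt_of_mem {α β : Type*} [Preorder β] [DecidableLT β]
    {s : Finset α} {f : α → β} {a : α} (ha : a ∈ s) {b : β} (hab : f a < b) :
    #{x ∈ s | f x < f a} < #{x ∈ s | f x < b} := by
  refine Finset.card_lt_card (Finset.ssubset_iff_of_subset ?_ |>.2 ⟨a, ?_, ?_⟩)
  · exact Finset.monotone_filter_right s fun _ _ hx => hx.trans hab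
  · exact Finset.mem_filter.2 ⟨ha, hab⟩
  · simp

theorem ZFSet.mem_of_singleton_inter_ne_empty {a x : ZFSet} (h : {a} ∩ x ≠ ∅) : a ∈ x := by
  obtain ⟨y, hy⟩ := not_forall_not.1 (mt (eq_empty _).2 h)
  rw [mem_inter, mem_singleton] at hy
  exact hy.1 ▸ hy.2

theorem ZFSet.singleton_subset_of_inter_ne_empty {a x : ZFSet} (h : {a} ∩ x ≠ ∅) :
    {a} ⊆ x := by
  intro y hy
  rw [mem_singleton.1 hy]
  exact mem_of_singleton_inter_ne_empty h

theorem ZFSet.not_singleton_subset_self (a : ZFSet) : ¬ {a} ⊆ a :=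
  fun h => mem_irrefl a (h (mem_singleton.2 rfl))

theorem ZFSet.vonNeumann_subset_and_ne_of_lt {a b : Ordinal} (hab : a < b) :
    V_ a ⊆ V_ b ∧ V_ a ≠ V_ b :=
  ⟨vonNeumann_subset_vonNeumann_iff.2 hab.le, vonNeumann_injective.ne hab.ne⟩

theorem xiConditions_vonNeumann_comp {V : Type*} {S : Finset (V × V)} {M : V → ZFSet}
    (hS : ∀ p ∈ S, M p.1 = {M p.2}) {g : ZFSet → ℕ}
    (hg : ∀ p ∈ S, ∀ x, M p.2 ∈ x → g (M p.2) < g x) :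
    XiConditions S M fun v => V_ (g (M v) : Ordinal) := by
  refine ⟨fun p hp => ?_, fun p hp q hq => ?_, fun p hp v hv => ?_, fun p hp v hv => ?_,
    fun u v huv => by simp only [huv]⟩
  · rw [hS p hp]
    exact not_singleton_subset_self _
  · rw [hS p hp, hS q hq, singleton_inj]
  · rw [hS p hp] at hv ⊢
    exact singleton_subset_of_inter_ne_empty hv
  · rw [hS p hp] at hv
    exact vonNeumann_subset_and_ne_of_lt
      (Nat.cast_lt.2 (hg p hp _ (mem_of_singleton_inter_ne_empty hv)))

theorem system_model_extends_to_xi {V : Type*}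
    (P N : Finset (V × V × V)) (S : Finset (V × V))
    (M : V → ZFSet) (hM : ModelsSystem P N S M) :
    ∃ T : V → ZFSet, XiConditions S M T :=
  ⟨_, xiConditions_vonNeumann_comp hM.2 (g := fun x => #{p ∈ S | rank (M p.2) < rank x})
    fun _ hp _ hx =>
      Finset.card_filter_lt_lt_of_mem (f := fun p => rank (M p.2)) hp (rank_lt_of_mem hx)⟩
end

section
/- Let V be a finite type of variables with a constraint system (P, N, S). Then there exists an assignment M : V → ZFSet modeling the whole system (P, N, S) if and only if there exist assignments M, T : V → ZFSet such that M models the literals P and N and the pair (M, T) satisfies the Ξ-conditions for (P, N, S). (This is the satisfiability-preservation content of the O(n²)-expressibility of singleton-atom conjunctions from BST into BST⁺.) -/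
/-!
Given `(M, T)` satisfying the Ξ-conditions, a model of the whole system is rebuilt one Venn region
at a time. An element `x` determines its region `{v | x ∈ M v}`, and `M' v` is the set of
representatives of the regions of the elements of `M v`. A region meeting the left side `M a` of a
singleton atom `a = {b}` is determined by `M a` (condition (iii)) and is represented by `M' b`,
which by (ii) does not depend on the atom chosen; every other region gets a fresh representative.
By (iv), `T b ⊊ T v` whenever such a region lies in `M v`, so the recursion is well founded, and
induction along the same order shows that distinct regions get distinct representatives. Hence
`M'` satisfies exactly the literals `a = b \ c` that `M` does, and `M' a = {M' b}` since
`M a ≠ ∅` by (i).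

Conversely, a model of the singleton atoms satisfies the Ξ-conditions with `T v` the von Neumann
numeral of the number of `u` with `rank (M u) < rank (M v)`. The assignments on the two sides live in independent universes, so
the forward direction also goes through the rebuilding.
-/

open ZFSet Ordinal

universe u₁ u₂ u₃

namespace ZFSet

theorem inter_ne_empty_of_mem_s12 {x y z : ZFSet.{u₁}} (hy : x ∈ y) (hz : x ∈ z) : y ∩ z ≠ ∅ :=
  fun h => notMem_empty x (h ▸ mem_inter.2 ⟨hy, hz⟩)

theorem mem_of_singleton_inter_ne_empty_s12 {x z : ZFSet.{u₁}} (h : {x} ∩ z ≠ ∅) : x ∈ z := by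
  obtain ⟨y, hy⟩ := (eq_empty_or_nonempty _).resolve_left h
  obtain ⟨hyx, hyz⟩ := mem_inter.1 hy
  rwa [mem_singleton.1 hyx] at hyz

theorem eq_sdiff_iff_of_mem_iff {ι : Type*} {A : ι → ZFSet.{u₁}} {B : ι → ZFSet.{u₂}}
    (φ : ZFSet.{u₁} → ZFSet.{u₂}) (hφ : ∀ x i, φ x ∈ B i ↔ x ∈ A i)
    (hB : ∀ i, ∀ y ∈ B i, ∃ x, φ x = y) (u v w : ι) :
    B u = B v \ B w ↔ A u = A v \ A w := by
  constructor
  · intro h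
    ext x
    rw [← hφ, h, mem_sdiff, hφ, hφ, mem_sdiff]
  · intro h
    ext y
    constructor
    · intro hy
      obtain ⟨x, rfl⟩ := hB u y hy
      rwa [mem_sdiff, hφ, hφ, ← mem_sdiff, ← h, ← hφ]
    · intro hy
      obtain ⟨x, rfl⟩ := hB v y (mem_sdiff.1 hy).1
      rw [hφ, h, mem_sdiff, ← hφ x v, ← hφ x w, ← mem_sdiff]
      exact hy

end ZFSet

theorem modelsLits_iff_of_eq_sdiff_iff {V : Type*} {P N : Finset (V × V × V)}
    {A : V → ZFSet.{u₁}} {B : V → ZFSet.{u₂}} (h : ∀ u v w, B u = B v \ B w ↔ A u = A v \ A w) :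
    ModelsLits P N B ↔ ModelsLits P N A := by
  simp only [ModelsLits, ne_eq, h]

namespace SingletonReduction

section Height

variable {V α : Type*} [Finite V] [Preorder α]

noncomputable def height (f : V → α) (v : V) : ℕ := {u | f u < f v}.ncard

theorem height_lt_height {f : V → α} {u v : V} (h : f u < f v) : height f u < height f v :=
  Set.ncard_lt_ncard ⟨fun _ hw => lt_trans hw h, fun hsub => lt_irrefl _ (hsub h)⟩

theorem height_lt_card (f : V → α) (v : V) : height f v < Nat.card V :=
  Set.ncard_lt_card fun h => lt_irrefl (f v) (h ▸ Set.mem_univ v : v ∈ {u | f u < f v})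

end Height

theorem xiConditions_of_singletons {V : Type*} [Finite V] {S : Finset (V × V)}
    {M : V → ZFSet.{u₁}} (hS : ∀ p ∈ S, M p.1 = {M p.2}) :
    XiConditions S M fun v => (height (fun v => rank (M v)) v : Ordinal.{u₃}).toZFSet := by
  refine ⟨fun p hp hsub => ?_, fun p hp q hq => ?_, fun p hp v hne => ?_,
    fun p hp v hne => ?_, fun u v h => by simp only [height, h]⟩
  · exact mem_irrefl _ (hsub (hS p hp ▸ mem_singleton.2 rfl))
  · rw [hS p hp, hS q hq, singleton_inj]
  · rw [hS p hp] at hne ⊢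
    exact fun y hy => mem_singleton.1 hy ▸ mem_of_singleton_inter_ne_empty_s12 hne
  · rw [hS p hp] at hne
    have hlt := toZFSet_strictMono (Nat.cast_lt.2 (height_lt_height (f := fun v => rank (M v))
      (rank_lt_of_mem (mem_of_singleton_inter_ne_empty_s12 hne))))
    exact ⟨hlt.le, hlt.ne⟩

section Rebuild

variable {V : Type*} [Finite V] (S : Finset (V × V)) (M : V → ZFSet.{u₁})

def region (x : ZFSet.{u₁}) : Set V := {v | x ∈ M v}

/-- An ordinal with more elements than there are regions, so that it is no `step S M F v`. -/
noncomputable def fresh (R : Set V) : ZFSet.{u₂} :=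
  ((Nat.card (Set V) + 1 + Finite.equivFin (Set V) R : ℕ) : Ordinal.{u₂}).toZFSet

open Classical in
noncomputable def regionElt (F : V → ZFSet.{u₂}) (R : Set V) : ZFSet.{u₂} :=
  if h : ∃ p ∈ S, p.1 ∈ R then F h.choose.2 else fresh R

noncomputable def step (F : V → ZFSet.{u₂}) (v : V) : ZFSet.{u₂} :=
  range fun R : {R : Set V // ∃ x ∈ M v, region M x = R} => regionElt S F R.1

/-- Under the Ξ-conditions `Nat.card V` rounds reach the fixed point of `step S M`, since
`height T` decreases along the recursion (`XiConditions.iterate_step_succ`). -/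
noncomputable def rebuild : V → ZFSet.{u₂} := (step S M)^[Nat.card V] fun _ => ∅

variable {S M}

theorem fresh_injective : Function.Injective (fresh : Set V → ZFSet.{u₂}) := fun _ _ h =>
  (Finite.equivFin (Set V)).injective <| Fin.ext <| Nat.add_left_cancel <|
    Nat.cast_injective (R := Ordinal.{u₂}) (toZFSet_injective h)

theorem regionElt_region_of_not {F : V → ZFSet.{u₂}} {x : ZFSet.{u₁}}
    (h : ¬∃ p ∈ S, x ∈ M p.1) : regionElt S F (region M x) = fresh (region M x) :=
  dif_neg h

theorem mem_step {F : V → ZFSet.{u₂}} {v : V} {y : ZFSet.{u₂}} :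
    y ∈ step S M F v ↔ ∃ x ∈ M v, regionElt S F (region M x) = y := by
  simp [step, mem_range]

theorem step_congr {F G : V → ZFSet.{u₂}} {v : V}
    (h : ∀ p ∈ S, ∀ x ∈ M v, x ∈ M p.1 → F p.2 = G p.2) : step S M F v = step S M G v := by
  ext y
  simp only [mem_step]
  refine exists_congr fun x => and_congr_right fun hx => ?_
  unfold regionElt
  split_ifs with hp
  · obtain ⟨hpS, hxp⟩ := hp.choose_spec
    rw [h _ hpS x hx hxp]
  · rfl

theorem step_ne_toZFSet (F : V → ZFSet.{u₂}) (v : V) {n : ℕ} (hn : Nat.card (Set V) < n) :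
    step S M F v ≠ (n : Ordinal.{u₂}).toZFSet := by
  intro h
  have hmem (i : Fin n) :
      ∃ x ∈ M v, regionElt S F (region M x) = ((i : ℕ) : Ordinal).toZFSet := by
    rw [← mem_step, h, toZFSet_mem_toZFSet_iff]
    exact_mod_cast i.2
  choose x _ hx using hmem
  have hinj : Function.Injective fun i => region M (x i) := fun i j hij => by
    have := (hx i).symm.trans ((congrArg (regionElt S F) hij).trans (hx j))
    exact Fin.ext (Nat.cast_injective (R := Ordinal.{u₂}) (toZFSet_injective this))
  have := Nat.card_le_card_of_injective _ hinj
  rw [Nat.card_fin] at this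
  omega

end Rebuild

end SingletonReduction

namespace XiConditions

open SingletonReduction

variable {V : Type*} {S : Finset (V × V)} {M : V → ZFSet.{u₁}} {T : V → ZFSet.{u₃}}
  {p q : V × V} {x : ZFSet.{u₁}}

theorem mem_iff_subset (hXi : XiConditions S M T) (hp : p ∈ S) (hx : x ∈ M p.1) (v : V) :
    x ∈ M v ↔ M p.1 ⊆ M v :=
  ⟨fun hv => hXi.2.2.1 p hp v (inter_ne_empty_of_mem_s12 hx hv), fun h => h hx⟩

theorem snd_eq_of_mem_fst (hXi : XiConditions S M T) (hp : p ∈ S) (hq : q ∈ S)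
    (hxp : x ∈ M p.1) (hxq : x ∈ M q.1) : M p.2 = M q.2 :=
  (hXi.2.1 p hp q hq).2 <| le_antisymm
    ((hXi.mem_iff_subset hp hxp q.1).1 hxq) ((hXi.mem_iff_subset hq hxq p.1).1 hxp)

theorem region_eq (hXi : XiConditions S M T) (hp : p ∈ S) (hq : q ∈ S) {y : ZFSet.{u₁}}
    (hx : x ∈ M p.1) (hy : y ∈ M q.1) (h : M p.2 = M q.2) : region M x = region M y := by
  ext v
  change x ∈ M v ↔ y ∈ M v
  rw [hXi.mem_iff_subset hp hx, hXi.mem_iff_subset hq hy, (hXi.2.1 p hp q hq).1 h]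

theorem height_lt [Finite V] (hXi : XiConditions S M T) (hp : p ∈ S) {v : V}
    (hx : x ∈ M p.1) (hv : x ∈ M v) : height T p.2 < height T v :=
  have h := hXi.2.2.2.1 p hp v (inter_ne_empty_of_mem_s12 hx hv)
  height_lt_height (lt_of_le_of_ne h.1 h.2)

variable [Finite V]

theorem iterate_step_succ (hXi : XiConditions S M T) (k : ℕ) :
    ∀ v, height T v < k →
      (step S M)^[k + 1] (fun _ => (∅ : ZFSet.{u₂})) v = (step S M)^[k] (fun _ => ∅) v := by
  induction k with
  | zero => intro v hv; omega
  | succ k ih =>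
    intro v hv
    rw [Function.iterate_succ_apply' _ (k + 1)]
    conv_rhs => rw [Function.iterate_succ_apply']
    exact step_congr fun p hp x hx hxp => ih p.2 (by have := hXi.height_lt hp hxp hx; omega)

theorem step_rebuild (hXi : XiConditions S M T) : step S M (rebuild S M) = rebuild.{u₁, u₂} S M :=
  funext fun v => by
    rw [rebuild, ← Function.iterate_succ_apply' (step S M)]
    exact hXi.iterate_step_succ _ v (height_lt_card T v)

theorem mem_rebuild (hXi : XiConditions S M T) {v : V} {y : ZFSet.{u₂}} :
    y ∈ rebuild S M v ↔ ∃ x ∈ M v, regionElt S (rebuild S M) (region M x) = y := by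
  rw [← mem_step, hXi.step_rebuild]

theorem rebuild_congr (hXi : XiConditions S M T) {u v : V} (h : M u = M v) :
    rebuild.{u₁, u₂} S M u = rebuild S M v := by
  ext y
  rw [hXi.mem_rebuild, hXi.mem_rebuild, h]

theorem regionElt_of_mem (hXi : XiConditions S M T) (hp : p ∈ S) (hx : x ∈ M p.1) :
    regionElt S (rebuild S M) (region M x) = rebuild.{u₁, u₂} S M p.2 := by
  have h : ∃ q ∈ S, q.1 ∈ region M x := ⟨p, hp, hx⟩
  obtain ⟨hq, hxq⟩ := h.choose_spec
  rw [regionElt, dif_pos h]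
  exact hXi.rebuild_congr (hXi.snd_eq_of_mem_fst hq hp hxq hx)

theorem fresh_ne_rebuild (hXi : XiConditions S M T) (R : Set V) (u : V) :
    fresh R ≠ rebuild.{u₁, u₂} S M u := by
  rw [← hXi.step_rebuild]
  exact (step_ne_toZFSet _ u (by omega)).symm

theorem region_eq_of_regionElt_eq (hXi : XiConditions S M T) {y : ZFSet.{u₁}}
    (hrec : ∀ p ∈ S, ∀ q ∈ S, x ∈ M p.1 → y ∈ M q.1 →
      rebuild.{u₁, u₂} S M p.2 = rebuild S M q.2 → M p.2 = M q.2)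
    (h : regionElt S (rebuild.{u₁, u₂} S M) (region M x) = regionElt S (rebuild S M) (region M y)) :
    region M x = region M y := by
  by_cases hx : ∃ p ∈ S, x ∈ M p.1 <;> by_cases hy : ∃ q ∈ S, y ∈ M q.1
  · obtain ⟨p, hp, hxp⟩ := hx
    obtain ⟨q, hq, hyq⟩ := hy
    rw [hXi.regionElt_of_mem hp hxp, hXi.regionElt_of_mem hq hyq] at h
    exact hXi.region_eq hp hq hxp hyq (hrec p hp q hq hxp hyq h)
  · obtain ⟨p, hp, hxp⟩ := hx
    rw [hXi.regionElt_of_mem hp hxp, regionElt_region_of_not hy] at h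
    exact absurd h.symm (hXi.fresh_ne_rebuild _ _)
  · obtain ⟨q, hq, hyq⟩ := hy
    rw [hXi.regionElt_of_mem hq hyq, regionElt_region_of_not hx] at h
    exact absurd h (hXi.fresh_ne_rebuild _ _)
  · rw [regionElt_region_of_not hx, regionElt_region_of_not hy] at h
    exact fresh_injective h

theorem regionElt_mem_rebuild (hXi : XiConditions S M T) {v : V} (hx : x ∈ M v) :
    regionElt S (rebuild.{u₁, u₂} S M) (region M x) ∈ rebuild S M v :=
  hXi.mem_rebuild.2 ⟨x, hx, rfl⟩

theorem mem_of_regionElt_mem_rebuild (hXi : XiConditions S M T) {v : V}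
    (hrec : ∀ p ∈ S, ∀ q ∈ S, x ∈ M p.1 → (∃ y ∈ M v, y ∈ M q.1) →
      rebuild.{u₁, u₂} S M p.2 = rebuild S M q.2 → M p.2 = M q.2)
    (h : regionElt S (rebuild.{u₁, u₂} S M) (region M x) ∈ rebuild S M v) : x ∈ M v := by
  obtain ⟨y, hy, hyx⟩ := hXi.mem_rebuild.1 h
  have := hXi.region_eq_of_regionElt_eq
    (fun p hp q hq hxp hyq hpq => hrec p hp q hq hxp ⟨y, hy, hyq⟩ hpq) hyx.symm
  exact (this ▸ hy : v ∈ region M x)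

theorem subset_of_rebuild_eq (hXi : XiConditions S M T) (n : ℕ) {u v : V}
    (hu : height T u < n) (hv : height T v < n) (h : rebuild.{u₁, u₂} S M u = rebuild S M v) :
    M u ⊆ M v := by
  induction n generalizing u v with
  | zero => omega
  | succ n ih =>
    intro x hx
    refine hXi.mem_of_regionElt_mem_rebuild (fun p hp q hq hxp ⟨y, hy, hyq⟩ hpq => ?_)
      (h ▸ hXi.regionElt_mem_rebuild hx)
    have hp := hXi.height_lt hp hxp hx
    have hq := hXi.height_lt hq hyq hy
    exact le_antisymm (ih (by omega) (by omega) hpq) (ih (by omega) (by omega) hpq.symm)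

theorem eq_of_rebuild_eq (hXi : XiConditions S M T) {u v : V}
    (h : rebuild.{u₁, u₂} S M u = rebuild S M v) : M u = M v :=
  le_antisymm (hXi.subset_of_rebuild_eq _ (height_lt_card T u) (height_lt_card T v) h)
    (hXi.subset_of_rebuild_eq _ (height_lt_card T v) (height_lt_card T u) h.symm)

theorem regionElt_mem_rebuild_iff (hXi : XiConditions S M T) {v : V} :
    regionElt S (rebuild.{u₁, u₂} S M) (region M x) ∈ rebuild S M v ↔ x ∈ M v :=
  ⟨hXi.mem_of_regionElt_mem_rebuild fun _ _ _ _ _ _ => hXi.eq_of_rebuild_eq,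
    hXi.regionElt_mem_rebuild⟩

theorem rebuild_fst (hXi : XiConditions S M T) (hp : p ∈ S) :
    rebuild.{u₁, u₂} S M p.1 = {rebuild S M p.2} := by
  obtain ⟨x, hx⟩ : ∃ x, x ∈ M p.1 := by
    by_contra! h
    exact hXi.1 p hp fun z hz => absurd hz (h z)
  ext y
  rw [hXi.mem_rebuild, mem_singleton]
  constructor
  · rintro ⟨z, hz, rfl⟩
    exact hXi.regionElt_of_mem hp hz
  · rintro rfl
    exact ⟨x, hx, hXi.regionElt_of_mem hp hx⟩

theorem exists_modelsSystem (hXi : XiConditions S M T) {P N : Finset (V × V × V)}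
    (hM : ModelsLits P N M) : ∃ M' : V → ZFSet.{u₂}, ModelsSystem P N S M' := by
  have hsdiff := eq_sdiff_iff_of_mem_iff (A := M) (B := rebuild S M)
    (fun x => regionElt S (rebuild S M) (region M x)) (fun _ _ => hXi.regionElt_mem_rebuild_iff)
    (fun _ _ hy => by obtain ⟨x, -, hx⟩ := hXi.mem_rebuild.1 hy; exact ⟨x, hx⟩)
  exact ⟨rebuild S M, (modelsLits_iff_of_eq_sdiff_iff hsdiff).2 hM, fun p hp => hXi.rebuild_fst hp⟩

end XiConditions

theorem system_sat_iff_xi_sat {V : Type*} [Fintype V]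
    (P N : Finset (V × V × V)) (S : Finset (V × V)) :
    (∃ M : V → ZFSet, ModelsSystem P N S M) ↔
      (∃ M T : V → ZFSet, ModelsLits P N M ∧ XiConditions S M T) := by
  constructor
  · rintro ⟨M, hM, hS⟩
    obtain ⟨M', hM', hS'⟩ :=
      (SingletonReduction.xiConditions_of_singletons.{_, 0} hS).exists_modelsSystem hM
    exact ⟨M', _, hM', SingletonReduction.xiConditions_of_singletons hS'⟩
  · rintro ⟨M, T, hM, hXi⟩
    exact hXi.exists_modelsSystem hM
end
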